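/- Let (T, P) be an ergodic process on a Lebesgue probability space, let 𝒯 be a Rokhlin tower for T, and let Q denote the finite partition whose elements are the levels of 𝒯 together with the intersections of the elements of P with the complement of the support of 𝒯. Then for every δ > 0 there exist n_0 ∈ ℕ and a measurable set W with μ(W) > 1 − δ such that d^P_n(x, y) ≤ d^Q_n(x, y) + 3Δ(𝒯, P) for all n > n_0 and all x, y ∈ W. -/

import Mathlib

open MeasureTheory Filter Topology Real
open scoped Classical

/-- A finite measurable ordered partition of `X`, indexed by a finite type `ι`. -/
structure FinPartition (X : Type*) [MeasurableSpace X] (ι : Type*) [Fintype ι] where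
  part : ι → Set X
  measurableSet_part : ∀ i, MeasurableSet (part i)
  disjoint_part : ∀ i j, i ≠ j → Disjoint (part i) (part j)
  iUnion_part : (⋃ i, part i) = Set.univ

namespace FinPartition

variable {X : Type*} [MeasurableSpace X] {ι : Type*} [Fintype ι]

/-- The index of the element of the partition containing `x`. -/
noncomputable def letter (P : FinPartition X ι) (x : X) : ι :=
  (Set.mem_iUnion.mp (Set.eq_univ_iff_forall.mp P.iUnion_part x)).choose

end FinPartition

/-- The `P`-`n`-name of a point `x` with respect to a transformation `T`. -/
noncomputable def pname {X : Type*} [MeasurableSpace X] {ι : Type*} [Fintype ι]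
    (T : X → X) (P : FinPartition X ι) (n : ℕ) (x : X) : Fin n → ι :=
  fun i => P.letter (T^[(i : ℕ)] x)

/-- Maximal number of coordinates of `v` and `w` that can be matched monotonically. -/
noncomputable def maxMatch {ι : Type*} {n : ℕ} (v w : Fin n → ι) : ℕ :=
  sSup {l : ℕ | ∃ a b : Fin l → Fin n, StrictMono a ∧ StrictMono b ∧ ∀ s, v (a s) = w (b s)}

/-- The modified Hamming distance (`f̄` distance) between two words of length `n`. -/
noncomputable def fbar {ι : Type*} {n : ℕ} (v w : Fin n → ι) : ℝ :=
  ((n : ℝ) - (maxMatch v w : ℝ)) / n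

/-- `f̄`-distance between the `P`-`n`-names of two points. -/
noncomputable def fbarP {X : Type*} [MeasurableSpace X] {ι : Type*} [Fintype ι]
    (T : X → X) (P : FinPartition X ι) (n : ℕ) (x y : X) : ℝ :=
  fbar (pname T P n x) (pname T P n y)

/-- The process `(T, P)` is loosely Bernoulli. -/
def LBprocess {X : Type*} [MeasurableSpace X] {ι : Type*} [Fintype ι]
    (μ : Measure X) (T : X → X) (P : FinPartition X ι) : Prop :=
  ∀ ε > (0 : ℝ), ∃ n₀ : ℕ, ∀ n > n₀, ∃ x : X,
    μ {y : X | fbarP T P n x y < ε} > ENNReal.ofReal (1 - ε)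

/-- Property `P(α, δ, n)` for the process `(T, P)`. -/
def VerifiesP {X : Type*} [MeasurableSpace X] {ι : Type*} [Fintype ι]
    (μ : Measure X) (T : X → X) (P : FinPartition X ι) (α δ : ℝ) (n : ℕ) : Prop :=
  ∃ W : Set X, MeasurableSet W ∧ μ W > ENNReal.ofReal (1 - δ) ∧
    ∀ x ∈ W, ∀ y ∈ W, fbarP T P n x y < 1 - α

/-- Entropy of the refinement `P ∨ T⁻¹P ∨ ⋯ ∨ T⁻⁽ⁿ⁻¹⁾P`. -/
noncomputable def partitionEntropyN {X : Type*} [MeasurableSpace X] {ι : Type*} [Fintype ι]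
    (μ : Measure X) (T : X → X) (P : FinPartition X ι) (n : ℕ) : ℝ :=
  ∑ w : Fin n → ι,
    Real.negMulLog (μ {x : X | ∀ i : Fin n, T^[(i : ℕ)] x ∈ P.part (w i)}).toReal

/-- Entropy of the process `(T, P)`. -/
noncomputable def processEntropy {X : Type*} [MeasurableSpace X] {ι : Type*} [Fintype ι]
    (μ : Measure X) (T : X → X) (P : FinPartition X ι) : ℝ :=
  Filter.liminf (fun n : ℕ => partitionEntropyN μ T P n / n) Filter.atTop

/-- Measure-theoretic (Kolmogorov–Sinai) entropy of `T`. -/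
noncomputable def ksEntropy {X : Type*} [MeasurableSpace X] (μ : Measure X) (T : X → X) : ℝ :=
  ⨆ m : ℕ, ⨆ P : FinPartition X (Fin m), processEntropy μ T P

/-- A Rokhlin tower for `T` with base `base` and height `height`. -/
structure RokhlinTower {X : Type*} [MeasurableSpace X] (T : X → X) where
  base : Set X
  height : ℕ
  height_pos : 0 < height
  measurableSet_base : MeasurableSet base
  disjoint_levels : ∀ i < height, ∀ j < height, i ≠ j →
    Disjoint (T^[i] '' base) (T^[j] '' base)

namespace RokhlinTower

variable {X : Type*} [MeasurableSpace X] {T : X → X}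

/-- The support of a Rokhlin tower: the union of its levels. -/
def support (𝒯 : RokhlinTower T) : Set X :=
  ⋃ i ∈ Finset.range 𝒯.height, T^[i] '' 𝒯.base

/-- The size of a Rokhlin tower: the measure of its support. -/
noncomputable def size (𝒯 : RokhlinTower T) (μ : Measure X) : ℝ :=
  (μ 𝒯.support).toReal

/-- The precision of a Rokhlin tower: `μ (F Δ T^h F)`. -/
noncomputable def prec (𝒯 : RokhlinTower T) (μ : Measure X) : ℝ :=
  (μ (symmDiff 𝒯.base (T^[𝒯.height] '' 𝒯.base))).toReal

/-- `Δ(𝒯, P)`: the infimum, over assignments of an element of `P` to each level of the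
tower, of the total measure of the parts of the levels not contained in the assigned
element.  (Each such assignment corresponds to a partition of the support of the tower
into unions of levels.) -/
noncomputable def delta {ι : Type*} [Fintype ι] (𝒯 : RokhlinTower T) (μ : Measure X)
    (P : FinPartition X ι) : ℝ :=
  ⨅ c : Fin 𝒯.height → ι,
    ∑ k : Fin 𝒯.height, (μ ((T^[(k : ℕ)] '' 𝒯.base) \ P.part (c k))).toReal

end RokhlinTower

/-- The sequence `α_n` defined by `α_0 = 0`, `α_{n+1} = α_n + δ_n` where
`δ_n = s_{n+1}² ((1 - α_n)/10)²`, for a given sequence of sizes `s`. -/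
noncomputable def alphaSeq (s : ℕ → ℝ) : ℕ → ℝ
  | 0 => 0
  | n + 1 => alphaSeq s n + s (n + 1) ^ 2 * ((1 - alphaSeq s n) / 10) ^ 2

/-- The sequence `δ_n = s_{n+1}² ((1 - α_n)/10)²`. -/
noncomputable def deltaSeq (s : ℕ → ℝ) (n : ℕ) : ℝ :=
  s (n + 1) ^ 2 * ((1 - alphaSeq s n) / 10) ^ 2

/-- `P` refines `Q` : every element of `P` is contained in some element of `Q`. -/
def Refines {X : Type*} [MeasurableSpace X] {ι κ : Type*} [Fintype ι] [Fintype κ]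
    (P : FinPartition X ι) (Q : FinPartition X κ) : Prop :=
  ∀ i, ∃ j, P.part i ⊆ Q.part j

/-- `P_n → ℰ`: every measurable set is approximated by `P_n`-measurable sets. -/
def TendsToFullSigma {X : Type*} [MeasurableSpace X] (μ : Measure X) {msz : ℕ → ℕ}
    (P : (n : ℕ) → FinPartition X (Fin (msz n))) : Prop :=
  ∀ A : Set X, MeasurableSet A → ∃ B : ℕ → Set X,
    (∀ n, ∃ s : Finset (Fin (msz n)), B n = ⋃ i ∈ s, (P n).part i) ∧
    Tendsto (fun n => μ (symmDiff (B n) A)) atTop (nhds 0)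

/-- A (zero-entropy) automorphism is loosely Bernoulli if there is a refining sequence of
finite measurable partitions generating the σ-algebra for which all associated processes
are loosely Bernoulli. -/
def LBmap {X : Type*} [MeasurableSpace X] (μ : Measure X) (T : X → X) : Prop :=
  ∃ (msz : ℕ → ℕ) (P : (n : ℕ) → FinPartition X (Fin (msz n))),
    (∀ n, Refines (P (n + 1)) (P n)) ∧ TendsToFullSigma μ P ∧ ∀ n, LBprocess μ T (P n)

/-- Weak mixing of a measure preserving transformation. -/
def WeakMixing {X : Type*} [MeasurableSpace X] (μ : Measure X) (T : X → X) : Prop :=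
  MeasurePreserving T μ μ ∧
  ∀ A B : Set X, MeasurableSet A → MeasurableSet B →
    Tendsto (fun n : ℕ => (∑ k ∈ Finset.range n,
      |(μ (A ∩ T^[k] ⁻¹' B)).toReal - (μ A).toReal * (μ B).toReal|) / n)
      atTop (nhds 0)

/-- Product of two finite partitions (ordered lexicographically). -/
def FinPartition.prod {X Y : Type*} [MeasurableSpace X] [MeasurableSpace Y]
    {ι κ : Type*} [Fintype ι] [Fintype κ]
    (P : FinPartition X ι) (Q : FinPartition Y κ) : FinPartition (X × Y) (ι × κ) where
  part := fun p => P.part p.1 ×ˢ Q.part p.2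
  measurableSet_part := fun p => (P.measurableSet_part p.1).prod (Q.measurableSet_part p.2)
  disjoint_part := by
    intro p q hpq
    have h : p.1 ≠ q.1 ∨ p.2 ≠ q.2 := by
      by_contra h
      push_neg at h
      exact hpq (Prod.ext h.1 h.2)
    rcases h with h | h
    · exact Set.disjoint_left.mpr fun a ha hb =>
        Set.disjoint_left.mp (P.disjoint_part _ _ h) ha.1 hb.1
    · exact Set.disjoint_left.mpr fun a ha hb =>
        Set.disjoint_left.mp (Q.disjoint_part _ _ h) ha.2 hb.2
  iUnion_part := by
    apply Set.eq_univ_iff_forall.mpr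
    intro a
    obtain ⟨i, hi⟩ := Set.mem_iUnion.mp (Set.eq_univ_iff_forall.mp P.iUnion_part a.1)
    obtain ⟨j, hj⟩ := Set.mem_iUnion.mp (Set.eq_univ_iff_forall.mp Q.iUnion_part a.2)
    exact Set.mem_iUnion.mpr ⟨(i, j), Set.mk_mem_prod hi hj⟩

/-- Hamming distance between the `n`-names of `x` and `y` determined by a
letter-assignment `f`. -/
noncomputable def dHam {X : Type*} {A : Type*} (T : X → X) (f : X → A) (n : ℕ)
    (x y : X) : ℝ :=
  (((Finset.range n).filter fun i => f (T^[i] x) ≠ f (T^[i] y)).card : ℝ) / n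

/-- The letter assignment associated to the partition
`Q = 𝒯 ∪ P|_{𝒯ᶜ}` : points of the tower are labelled by their level, points outside the
tower by their `P`-letter. -/
noncomputable def towerLetter {X : Type*} [MeasurableSpace X] {ι : Type*} [Fintype ι]
    {T : X → X} (𝒯 : RokhlinTower T) (P : FinPartition X ι) (z : X) : ℕ ⊕ ι :=
  if h : ∃ k, k < 𝒯.height ∧ z ∈ T^[k] '' 𝒯.base then Sum.inl (Nat.find h)
  else Sum.inr (P.letter z)

/-!
Fix a labelling `c` of the levels of `𝒯` by letters of `P` that realises `Δ(𝒯, P)`, and let `E`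
be the set of points of the tower whose `P`-letter differs from the label of their level, so
that `μ E ≤ Δ`. If the `Q`-names of `x` and `y` agree at time `i` but their `P`-names do not,
then `T^i x ∈ E` or `T^i y ∈ E`; hence `d^P_n(x, y)` is at most `d^Q_n(x, y)` plus the
frequencies of visits of `x` and of `y` to `E` before time `n`. By the maximal ergodic theorem
almost every point eventually visits `E` with frequency below `3Δ/2` (never, if `Δ = 0`), and
by continuity of measure this holds for all `n > n₀` simultaneously on a set of measure
`> 1 - δ`.
-/

section BirkhoffMax

variable {α : Type*} {f : α → α} {g : α → ℝ}

noncomputable def birkhoffMax (f : α → α) (g : α → ℝ) : ℕ → α → ℝ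
  | 0 => 0
  | N + 1 => birkhoffMax f g N ⊔ birkhoffSum f g (N + 1)

theorem birkhoffMax_le_iff {N : ℕ} {x : α} {c : ℝ} :
    birkhoffMax f g N x ≤ c ↔ ∀ n ≤ N, birkhoffSum f g n x ≤ c := by
  induction N with
  | zero => simp [birkhoffMax]
  | succ N ih => simp [birkhoffMax, ih, Nat.le_succ_iff, or_imp, forall_and]

theorem birkhoffSum_le_birkhoffMax {n N : ℕ} (h : n ≤ N) (x : α) :
    birkhoffSum f g n x ≤ birkhoffMax f g N x :=
  birkhoffMax_le_iff.1 le_rfl n h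

theorem birkhoffMax_nonneg (N : ℕ) (x : α) : 0 ≤ birkhoffMax f g N x := by
  simpa using birkhoffSum_le_birkhoffMax (f := f) (g := g) N.zero_le x

theorem birkhoffMax_pos_iff {N : ℕ} {x : α} :
    0 < birkhoffMax f g N x ↔ ∃ n ≤ N, 0 < birkhoffSum f g n x := by
  simpa using birkhoffMax_le_iff.not

theorem birkhoffMax_le_add_birkhoffMax_apply {N : ℕ} {x : α} (hx : 0 < birkhoffMax f g N x) :
    birkhoffMax f g N x ≤ g x + birkhoffMax f g N (f x) := by
  have hsucc : ∀ n ≤ N, birkhoffSum f g (n + 1) x ≤ g x + birkhoffMax f g N (f x) :=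
    fun n hn ↦ by
      rw [birkhoffSum_succ']
      gcongr
      exact birkhoffSum_le_birkhoffMax hn _
  obtain ⟨_ | k, hk, hpos⟩ := birkhoffMax_pos_iff.1 hx
  · simp at hpos
  refine birkhoffMax_le_iff.2 fun n hn ↦ ?_
  rcases n with _ | n
  · exact (birkhoffSum_zero f g x).trans_le (hpos.trans_le (hsucc k (by omega))).le
  · exact hsucc n (by omega)

end BirkhoffMax

section Measurability

variable {α : Type*} [MeasurableSpace α] {μ : Measure α} {f : α → α} {g : α → ℝ}

theorem Measurable.birkhoffSum (hf : Measurable f) (hg : Measurable g) (n : ℕ) :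
    Measurable (birkhoffSum f g n) :=
  Finset.measurable_sum _ fun k _ ↦ hg.comp (hf.iterate k)

theorem Measurable.birkhoffAverage (hf : Measurable f) (hg : Measurable g) (n : ℕ) :
    Measurable (birkhoffAverage ℝ f g n) :=
  (hf.birkhoffSum hg n).const_smul (n : ℝ)⁻¹

theorem Measurable.birkhoffMax (hf : Measurable f) (hg : Measurable g) (N : ℕ) :
    Measurable (birkhoffMax f g N) := by
  induction N with
  | zero => exact measurable_const
  | succ N ih => exact ih.sup (hf.birkhoffSum hg _)

theorem MeasureTheory.MeasurePreserving.integrable_birkhoffSum (hf : MeasurePreserving f μ μ)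
    (hg : Integrable g μ) (n : ℕ) : Integrable (birkhoffSum f g n) μ :=
  integrable_finsetSum _ fun k _ ↦ (hf.iterate k).integrable_comp_of_integrable hg

theorem MeasureTheory.MeasurePreserving.integrable_birkhoffMax (hf : MeasurePreserving f μ μ)
    (hg : Integrable g μ) (N : ℕ) : Integrable (birkhoffMax f g N) μ := by
  induction N with
  | zero => exact integrable_zero _ _ _
  | succ N ih => exact ih.sup (hf.integrable_birkhoffSum hg _)

end Measurability

namespace MeasureTheory.MeasurePreserving

variable {α : Type*} [MeasurableSpace α] {μ : Measure α} {f : α → α} {g : α → ℝ}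

theorem setIntegral_birkhoffMax_pos_nonneg (hf : MeasurePreserving f μ μ) (hgm : Measurable g)
    (hg : Integrable g μ) (N : ℕ) :
    0 ≤ ∫ x in {x | 0 < birkhoffMax f g N x}, g x ∂μ := by
  set M := birkhoffMax f g N
  have hM : Integrable M μ := hf.integrable_birkhoffMax hg N
  have hMf : Integrable (fun x ↦ M (f x)) μ := hf.integrable_comp_of_integrable hM
  have hMm : Measurable M := hf.measurable.birkhoffMax hgm N
  have hA : MeasurableSet {x | 0 < M x} := measurableSet_lt measurable_const hMm
  -- Off `{0 < M}` the maximal function vanishes, on it `M ≤ g + M ∘ f`.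
  calc 0 = ∫ x, M x ∂μ - ∫ x, M (f x) ∂μ := by
          rw [← integral_map hf.aemeasurable hMm.aestronglyMeasurable, hf.map_eq, sub_self]
    _ ≤ ∫ x in {x | 0 < M x}, M x ∂μ - ∫ x in {x | 0 < M x}, M (f x) ∂μ := by
          rw [setIntegral_eq_integral_of_forall_compl_eq_zero (s := {x | 0 < M x}) fun x hx ↦
            le_antisymm (not_lt.1 hx) (birkhoffMax_nonneg N x)]
          exact sub_le_sub_left (setIntegral_le_integral hMf
            (ae_of_all _ fun x ↦ birkhoffMax_nonneg N (f x))) _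
    _ = ∫ x in {x | 0 < M x}, (M x - M (f x)) ∂μ :=
          (integral_sub hM.integrableOn hMf.integrableOn).symm
    _ ≤ ∫ x in {x | 0 < M x}, g x ∂μ :=
          setIntegral_mono_on (hM.sub hMf).integrableOn hg.integrableOn hA fun x hx ↦ by
            have := birkhoffMax_le_add_birkhoffMax_apply (f := f) (g := g) hx
            linarith

theorem setIntegral_exists_birkhoffSum_pos_nonneg (hf : MeasurePreserving f μ μ)
    (hgm : Measurable g) (hg : Integrable g μ) :
    0 ≤ ∫ x in {x | ∃ n, 0 < birkhoffSum f g n x}, g x ∂μ := by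
  have hunion : (⋃ N, {x | 0 < birkhoffMax f g N x}) = {x | ∃ n, 0 < birkhoffSum f g n x} := by
    ext x
    simp only [Set.mem_iUnion, Set.mem_ofPred_eq, birkhoffMax_pos_iff]
    exact ⟨fun ⟨_, n, _, h⟩ ↦ ⟨n, h⟩, fun ⟨n, h⟩ ↦ ⟨n, n, le_rfl, h⟩⟩
  have hmono : Monotone fun N ↦ {x | 0 < birkhoffMax f g N x} :=
    fun N N' h x hx ↦ birkhoffMax_pos_iff.2 <|
      (birkhoffMax_pos_iff.1 hx).imp fun n hn ↦ ⟨hn.1.trans h, hn.2⟩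
  have := tendsto_setIntegral_of_monotone
    (fun N ↦ measurableSet_lt measurable_const (hf.measurable.birkhoffMax hgm N)) hmono
    hg.integrableOn
  rw [hunion] at this
  exact ge_of_tendsto' this fun N ↦ hf.setIntegral_birkhoffMax_pos_nonneg hgm hg N

end MeasureTheory.MeasurePreserving

theorem Filter.limsup_le_limsup_of_tendsto_sub {ι : Type*} {l : Filter ι} [l.NeBot]
    {u v : ι → ℝ} (hv : IsBoundedUnder (· ≤ ·) l v) (hv' : IsBoundedUnder (· ≥ ·) l v)
    (h : Tendsto (fun i ↦ u i - v i) l (𝓝 0)) : limsup u l ≤ limsup v l := by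
  have hsum : limsup (v + (u - v)) l ≤ limsup v l + limsup (u - v) l :=
    limsup_add_le hv' hv h.isBoundedUnder_ge.isCoboundedUnder_le h.isBoundedUnder_le
  rwa [add_sub_cancel, (show Tendsto (u - v) l (𝓝 0) from h).limsup_eq, add_zero] at hsum

section Averages

variable {α : Type*} {f : α → α} {g : α → ℝ}

theorem abs_birkhoffAverage_le {C : ℝ} (hC : 0 ≤ C) (hg : ∀ x, |g x| ≤ C) (n : ℕ) (x : α) :
    |birkhoffAverage ℝ f g n x| ≤ C := by
  rcases n.eq_zero_or_pos with rfl | hn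
  · simpa using hC
  rw [birkhoffAverage, birkhoffSum, smul_eq_mul, abs_mul, abs_inv, Nat.abs_cast,
    inv_mul_le_iff₀ (by positivity)]
  calc |∑ k ∈ Finset.range n, g (f^[k] x)| ≤ ∑ k ∈ Finset.range n, |g (f^[k] x)| :=
        Finset.abs_sum_le_sum_abs _ _
    _ ≤ n * C := by
        simpa using Finset.sum_le_card_nsmul (Finset.range n) _ C fun k _ ↦ hg (f^[k] x)

theorem exists_forall_abs_birkhoffAverage_le (hg : Bornology.IsBounded (Set.range g)) :
    ∃ C, ∀ n x, |birkhoffAverage ℝ f g n x| ≤ C := by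
  obtain ⟨C, hC0, hC⟩ := hg.exists_pos_norm_le
  exact ⟨C, abs_birkhoffAverage_le hC0.le fun x ↦ hC _ (Set.mem_range_self x)⟩

theorem isBoundedUnder_le_birkhoffAverage (hg : Bornology.IsBounded (Set.range g)) (x : α) :
    IsBoundedUnder (· ≤ ·) atTop (birkhoffAverage ℝ f g · x) :=
  let ⟨C, hC⟩ := exists_forall_abs_birkhoffAverage_le (f := f) hg
  isBoundedUnder_of ⟨C, fun n ↦ (abs_le.1 (hC n x)).2⟩

theorem isBoundedUnder_ge_birkhoffAverage (hg : Bornology.IsBounded (Set.range g)) (x : α) :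
    IsBoundedUnder (· ≥ ·) atTop (birkhoffAverage ℝ f g · x) :=
  let ⟨C, hC⟩ := exists_forall_abs_birkhoffAverage_le (f := f) hg
  isBoundedUnder_of ⟨-C, fun n ↦ (abs_le.1 (hC n x)).1⟩

theorem exists_birkhoffSum_sub_pos_of_lt_limsup {x : α} {c : ℝ}
    (hx : IsCoboundedUnder (· ≤ ·) atTop (birkhoffAverage ℝ f g · x))
    (hc : c < limsup (birkhoffAverage ℝ f g · x) atTop) :
    ∃ n, 0 < birkhoffSum f (fun y ↦ g y - c) n x := by
  obtain ⟨n, hcn, hn⟩ :=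
    ((frequently_lt_of_lt_limsup hx hc).and_eventually (eventually_gt_atTop 0)).exists
  refine ⟨n, ?_⟩
  have hsum : birkhoffSum f (fun y ↦ g y - c) n x = birkhoffSum f g n x - n * c := by
    simp [birkhoffSum, Finset.sum_sub_distrib]
  rw [birkhoffAverage, smul_eq_mul, lt_inv_mul_iff₀ (by positivity)] at hcn
  linarith

end Averages

namespace Ergodic

variable {α : Type*} [MeasurableSpace α] {μ : Measure α} [IsProbabilityMeasure μ]
  {f : α → α} {g : α → ℝ}

theorem ae_limsup_birkhoffAverage_le (hf : Ergodic f μ) (hgm : Measurable g)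
    (hgb : Bornology.IsBounded (Set.range g)) {c : ℝ} (hc : ∫ x, g x ∂μ < c) :
    ∀ᵐ x ∂μ, limsup (birkhoffAverage ℝ f g · x) atTop ≤ c := by
  have hle := isBoundedUnder_le_birkhoffAverage (f := f) hgb
  have hge := isBoundedUnder_ge_birkhoffAverage (f := f) hgb
  set L : α → ℝ := fun x ↦ limsup (birkhoffAverage ℝ f g · x) atTop
  have hLm : Measurable L := Measurable.limsup fun n ↦ hf.measurable.birkhoffAverage hgm n
  have hLf : ∀ x, L (f x) = L x := fun x ↦ by
    have h := tendsto_birkhoffAverage_apply_sub_birkhoffAverage' ℝ hgb f x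
    refine le_antisymm (limsup_le_limsup_of_tendsto_sub (hle x) (hge x) h)
      (limsup_le_limsup_of_tendsto_sub (hle (f x)) (hge (f x)) ?_)
    simpa using h.neg
  have hD : MeasurableSet {x | c < L x} := measurableSet_lt measurable_const hLm
  rcases hf.ae_empty_or_univ hD (by ext x; simp [hLf]) with hnull | hconull
  · filter_upwards [measure_eq_zero_iff_ae_notMem.1 (ae_eq_empty.1 hnull)] with x hx
    exact not_lt.1 hx
  -- A conull set `{c < L}` would lie in the maximal set of `g - c`, whose integral is negative.
  exfalso
  set G := {x | ∃ n, 0 < birkhoffSum f (fun y ↦ g y - c) n x}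
  have hDG : {x | c < L x} ⊆ G := fun x hx ↦
    exists_birkhoffSum_sub_pos_of_lt_limsup (hge x).isCoboundedUnder_le hx
  have hG : μ.restrict G = μ := Measure.restrict_eq_self_of_ae_mem <|
    (measure_eq_zero_iff_ae_notMem.1 (ae_eq_univ.1 hconull)).mono fun x hx ↦
      hDG (by simpa using hx)
  obtain ⟨C, hC⟩ := hgb.exists_norm_le
  have hgi : Integrable g μ := .of_bound hgm.aestronglyMeasurable C
    (ae_of_all _ fun x ↦ hC _ (Set.mem_range_self x))
  have hmax := hf.toMeasurePreserving.setIntegral_exists_birkhoffSum_pos_nonneg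
    (g := fun y ↦ g y - c) (hgm.sub measurable_const) (hgi.sub (integrable_const c))
  rw [hG, integral_sub hgi (integrable_const c)] at hmax
  simp at hmax
  linarith

theorem ae_eventually_birkhoffAverage_lt (hf : Ergodic f μ) (hgm : Measurable g)
    (hgb : Bornology.IsBounded (Set.range g)) {c : ℝ} (hc : ∫ x, g x ∂μ < c) :
    ∀ᵐ x ∂μ, ∀ᶠ n in atTop, birkhoffAverage ℝ f g n x < c := by
  obtain ⟨d, hgd, hdc⟩ := exists_between hc
  filter_upwards [hf.ae_limsup_birkhoffAverage_le hgm hgb hgd] with x hx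
  exact eventually_lt_of_limsup_lt (hx.trans_lt hdc) (isBoundedUnder_le_birkhoffAverage hgb x)

theorem ae_eventually_birkhoffAverage_indicator_lt (hf : Ergodic f μ) {s : Set α}
    (hs : MeasurableSet s) {c : ℝ} (hc : μ.real s < c) :
    ∀ᵐ x ∂μ, ∀ᶠ n in atTop, birkhoffAverage ℝ f (s.indicator 1) n x < c := by
  have hbdd : Bornology.IsBounded (Set.range (s.indicator (1 : α → ℝ))) :=
    isBounded_iff_forall_norm_le.2 ⟨1, Set.forall_mem_range.2 fun x ↦ by
      by_cases hx : x ∈ s <;> simp [hx]⟩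
  exact hf.ae_eventually_birkhoffAverage_lt (measurable_one.indicator hs) hbdd
    (by rwa [integral_indicator_one hs])

end Ergodic

theorem MeasureTheory.tendsto_measure_setOf_forall_ge {α : Type*} [MeasurableSpace α]
    {μ : Measure α} {p : ℕ → α → Prop} (h : ∀ᵐ x ∂μ, ∀ᶠ n in atTop, p n x) :
    Tendsto (fun N ↦ μ {x | ∀ n ≥ N, p n x}) atTop (𝓝 (μ Set.univ)) := by
  have hmono : Monotone fun N ↦ {x | ∀ n ≥ N, p n x} :=
    fun N N' hN x hx n hn ↦ hx n (hN.trans hn)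
  have hunion : (⋃ N, {x | ∀ n ≥ N, p n x}) =ᵐ[μ] Set.univ :=
    eventuallyEq_univ.2 <| h.mono fun x hx ↦ Set.mem_iUnion.2 (eventually_atTop.1 hx)
  rw [← measure_congr hunion]
  exact tendsto_measure_iUnion_atTop hmono

theorem MeasureTheory.exists_measurableSet_forall_ge_le_of_ae_eventually_le {α : Type*}
    [MeasurableSpace α] {μ : Measure α} [IsProbabilityMeasure μ] {u : ℕ → α → ℝ} {c : ℝ}
    (hu : ∀ n, Measurable (u n)) (h : ∀ᵐ x ∂μ, ∀ᶠ n in atTop, u n x ≤ c) {δ : ℝ} (hδ : 0 < δ) :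
    ∃ N W, MeasurableSet W ∧ ENNReal.ofReal (1 - δ) < μ W ∧ ∀ x ∈ W, ∀ n ≥ N, u n x ≤ c := by
  have hδ1 : ENNReal.ofReal (1 - δ) < μ Set.univ := by
    rw [measure_univ, ENNReal.ofReal_lt_one]
    linarith
  obtain ⟨N, hN⟩ := ((tendsto_measure_setOf_forall_ge h).eventually_const_lt hδ1).exists
  refine ⟨N, _, ?_, hN, fun x hx ↦ hx⟩
  simp only [Set.ofPred_forall]
  exact .iInter fun n ↦ .iInter fun _ ↦ measurableSet_le (hu n) measurable_const

theorem MeasureTheory.MeasurePreserving.ae_birkhoffAverage_indicator_eq_zero {α : Type*}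
    [MeasurableSpace α] {μ : Measure α} {f : α → α} (hf : MeasurePreserving f μ μ) {s : Set α}
    (hs : μ s = 0) : ∀ᵐ x ∂μ, ∀ n, birkhoffAverage ℝ f (s.indicator (1 : α → ℝ)) n x = 0 := by
  have hnot : ∀ᵐ x ∂μ, ∀ k, f^[k] x ∉ s := ae_all_iff.2 fun k ↦
    measure_eq_zero_iff_ae_notMem.1 <| (hf.iterate k).quasiMeasurePreserving.preimage_null hs
  filter_upwards [hnot] with x hx n
  simp [birkhoffAverage, birkhoffSum, hx]

theorem FinPartition.mem_part_letter {X : Type*} [MeasurableSpace X] {ι : Type*} [Fintype ι]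
    (P : FinPartition X ι) (x : X) : x ∈ P.part (P.letter x) :=
  (Set.mem_iUnion.mp (Set.eq_univ_iff_forall.mp P.iUnion_part x)).choose_spec

theorem FinPartition.letter_eq_of_mem {X : Type*} [MeasurableSpace X] {ι : Type*} [Fintype ι]
    (P : FinPartition X ι) {x : X} {i : ι} (h : x ∈ P.part i) : P.letter x = i := by
  by_contra hne
  exact Set.disjoint_left.mp (P.disjoint_part _ _ hne) (P.mem_part_letter x) h

theorem dHam_le_add_birkhoffAverage_indicator {X A B : Type*} {T : X → X} {f : X → A}
    {q : X → B} {E : Set X} (h : ∀ z z', q z = q z' → f z ≠ f z' → z ∈ E ∨ z' ∈ E)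
    (n : ℕ) (x y : X) :
    dHam T f n x y ≤ dHam T q n x y + birkhoffAverage ℝ T (E.indicator 1) n x
      + birkhoffAverage ℝ T (E.indicator 1) n y := by
  simp only [dHam, birkhoffAverage, birkhoffSum, Finset.card_filter, smul_eq_mul]
  push_cast
  rw [div_eq_inv_mul, div_eq_inv_mul, ← mul_add, ← mul_add, ← Finset.sum_add_distrib,
    ← Finset.sum_add_distrib]
  gcongr with i
  simp only [Set.indicator_apply, Pi.one_apply]
  split_ifs with hf hq hx hy <;> norm_num
  rcases h _ _ (not_not.1 hq) hf with hE | hE <;> contradiction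

namespace RokhlinTower

variable {X : Type*} [MeasurableSpace X] {T : X → X} {ι : Type*} [Fintype ι]

def mislabeled (𝒯 : RokhlinTower T) (P : FinPartition X ι) (c : Fin 𝒯.height → ι) : Set X :=
  ⋃ k : Fin 𝒯.height, (T^[(k : ℕ)] '' 𝒯.base) \ P.part (c k)

theorem measurableSet_mislabeled [StandardBorelSpace X] (hT : Measurable T)
    (hT' : Function.Injective T) (𝒯 : RokhlinTower T) (P : FinPartition X ι)
    (c : Fin 𝒯.height → ι) : MeasurableSet (𝒯.mislabeled P c) :=
  .iUnion fun k ↦ ((hT.iterate k).measurableEmbedding (hT'.iterate k) |>.measurableSet_image'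
    𝒯.measurableSet_base).diff (P.measurableSet_part _)

theorem exists_measureReal_mislabeled_le_delta [Nonempty ι] (𝒯 : RokhlinTower T)
    (μ : Measure X) (P : FinPartition X ι) : ∃ c, μ.real (𝒯.mislabeled P c) ≤ 𝒯.delta μ P := by
  obtain ⟨c, hc⟩ := exists_eq_ciInf_of_finite (f := fun c : Fin 𝒯.height → ι ↦
    ∑ k : Fin 𝒯.height, (μ ((T^[(k : ℕ)] '' 𝒯.base) \ P.part (c k))).toReal)
  exact ⟨c, (measureReal_iUnion_fintype_le _).trans_eq hc⟩

theorem mem_mislabeled_of_towerLetter_eq (𝒯 : RokhlinTower T) (P : FinPartition X ι)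
    (c : Fin 𝒯.height → ι) {z z' : X} (h : towerLetter 𝒯 P z = towerLetter 𝒯 P z')
    (hne : P.letter z ≠ P.letter z') : z ∈ 𝒯.mislabeled P c ∨ z' ∈ 𝒯.mislabeled P c := by
  unfold towerLetter at h
  split_ifs at h with hz hz'
  · obtain ⟨hk, hzk⟩ := Nat.find_spec hz
    have hz'k : z' ∈ T^[Nat.find hz] '' 𝒯.base := (Sum.inl.inj h) ▸ (Nat.find_spec hz').2
    by_contra! hnot
    simp only [mislabeled, Set.mem_iUnion, Set.mem_sdiff, not_exists, not_and, not_not] at hnot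
    exact hne <| (P.letter_eq_of_mem (hnot.1 ⟨_, hk⟩ hzk)).trans
      (P.letter_eq_of_mem (hnot.2 ⟨_, hk⟩ hz'k)).symm
  · exact absurd (Sum.inr.inj h) hne

end RokhlinTower

/-- names and towers.  Let `(T, P)` be an ergodic process, `𝒯` a Rokhlin
tower, and `Q = 𝒯 ∪ P|_{𝒯ᶜ}` the partition whose elements are the levels of `𝒯` together
with the traces of the elements of `P` on the complement of the support of `𝒯`.  Then for
every `δ > 0` there are `n₀ ∈ ℕ` and a measurable set `W` with `μ W > 1 - δ` such that
`d^P_n(x, y) ≤ d^Q_n(x, y) + 3Δ(𝒯, P)` for all `n > n₀` and all `x, y ∈ W`. -/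
theorem names_and_towers
    {X : Type*} [MeasurableSpace X] [StandardBorelSpace X]
    (μ : MeasureTheory.Measure X) [MeasureTheory.IsProbabilityMeasure μ]
    (T : X → X) (hT : Ergodic T μ) (hbij : Function.Bijective T)
    {m : ℕ} (P : FinPartition X (Fin m)) (𝒯 : RokhlinTower T) :
    ∀ δ > (0 : ℝ), ∃ (n₀ : ℕ) (W : Set X), MeasurableSet W ∧
      μ W > ENNReal.ofReal (1 - δ) ∧
      ∀ n > n₀, ∀ x ∈ W, ∀ y ∈ W,
        dHam T P.letter n x y ≤ dHam T (towerLetter 𝒯 P) n x y + 3 * 𝒯.delta μ P := by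
  intro δ hδ
  have : Nonempty (Fin m) := ⟨P.letter (nonempty_of_isProbabilityMeasure μ).some⟩
  obtain ⟨c, hc⟩ := 𝒯.exists_measureReal_mislabeled_le_delta μ P
  set E := 𝒯.mislabeled P c
  set Δ := 𝒯.delta μ P
  have hE : MeasurableSet E := 𝒯.measurableSet_mislabeled hT.measurable hbij.injective P c
  have hfreq : ∀ᵐ x ∂μ, ∀ᶠ n in atTop, birkhoffAverage ℝ T (E.indicator 1) n x ≤ 3 / 2 * Δ := by
    rcases (measureReal_nonneg.trans hc).eq_or_lt with hΔ | hΔ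
    · have hE0 : μ E = 0 := (measureReal_eq_zero_iff).1 (le_antisymm (hΔ ▸ hc) measureReal_nonneg)
      filter_upwards [hT.toMeasurePreserving.ae_birkhoffAverage_indicator_eq_zero hE0] with x hx
      exact .of_forall fun n ↦ by rw [hx n, ← hΔ, mul_zero]
    · filter_upwards [hT.ae_eventually_birkhoffAverage_indicator_lt hE (c := 3 / 2 * Δ)
        (by linarith)] with x hx
      exact hx.mono fun _ ↦ le_of_lt
  obtain ⟨N, W, hW, hμW, hWE⟩ := exists_measurableSet_forall_ge_le_of_ae_eventually_le
    (hT.measurable.birkhoffAverage (measurable_one.indicator hE)) hfreq hδ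
  refine ⟨N, W, hW, hμW, fun n hn x hx y hy ↦ ?_⟩
  calc dHam T P.letter n x y
      ≤ dHam T (towerLetter 𝒯 P) n x y + birkhoffAverage ℝ T (E.indicator 1) n x
        + birkhoffAverage ℝ T (E.indicator 1) n y :=
        dHam_le_add_birkhoffAverage_indicator
          (fun _ _ ↦ 𝒯.mem_mislabeled_of_towerLetter_eq P c) n x y
    _ ≤ dHam T (towerLetter 𝒯 P) n x y + 3 / 2 * Δ + 3 / 2 * Δ := by
        gcongr
        exacts [hWE x hx n hn.le, hWE y hy n hn.le]
    _ = dHam T (towerLetter 𝒯 P) n x y + 3 * Δ := by ring
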